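/- Let $X_{1:n} \in \mathbb{R}^{d \times n}$ be a matrix with columns $x_t$ and suppose $X_{1:n} = U V^\intercal$ where $U \in \mathbb{R}^{d\times k}$, $V \in \mathbb{R}^{n \times k}$. Then for independent Rademacher variables $\varepsilon_t$: $\mathbb{E}_\varepsilon\big\|\sum_{t=1}^n \varepsilon_t x_t\big\|_\infty \leq \|U\|_{\infty,2}\, \mathbb{E}_\varepsilon\big\|\sum_{t=1}^n \varepsilon_t v_t\big\|_2 \leq \|U\|_{\infty,2}\|V\|_{\infty,2}\sqrt{n}$, where $v_t$ is the $t$-th row of $V$. In particular, the expected $\ell_\infty$ Rademacher sum is at most $\|X_{1:n}\|_{\max}\sqrt{n}$ where $\|X\|_{\max} = \min\{\|U\|_{\infty,2}\|V\|_{\infty,2} : X = UV^\intercal\}$. -/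
import Mathlib


open Finset Real Matrix

/-- The real sign `±1` associated to a boolean. -/
noncomputable def sgn (b : Bool) : ℝ := if b then 1 else -1

/-- Maximum row `ℓ₂` norm of a matrix (the `(∞,2)` group norm). -/
noncomputable def rowNorm {m k : ℕ} (A : Matrix (Fin m) (Fin k) ℝ) : ℝ :=
  ⨆ i, Real.sqrt (∑ j, A i j ^ 2)

lemma sgn_mul_self (b : Bool) : sgn b * sgn b = 1 := by cases b <;> simp [sgn]

lemma sgn_not (b : Bool) : sgn (!b) = - sgn b := by cases b <;> simp [sgn]

lemma rowNorm_nonneg {m k : ℕ} (A : Matrix (Fin m) (Fin k) ℝ) : 0 ≤ rowNorm A :=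
  Real.iSup_nonneg fun _ => Real.sqrt_nonneg _

lemma sqrt_row_le {m k : ℕ} (A : Matrix (Fin m) (Fin k) ℝ) (i : Fin m) :
    Real.sqrt (∑ j, A i j ^ 2) ≤ rowNorm A :=
  by
  rw [rowNorm]
  exact le_ciSup (f := fun i => Real.sqrt (∑ j, A i j ^ 2))
    (Set.Finite.bddAbove (Set.finite_range _)) i

lemma row_sq_le {m k : ℕ} (A : Matrix (Fin m) (Fin k) ℝ) (i : Fin m) :
    ∑ j, A i j ^ 2 ≤ rowNorm A ^ 2 := by
  have h := sqrt_row_le A i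
  have h0 : (0:ℝ) ≤ ∑ j, A i j ^ 2 := Finset.sum_nonneg fun _ _ => sq_nonneg _
  calc ∑ j, A i j ^ 2 = Real.sqrt (∑ j, A i j ^ 2) ^ 2 := (Real.sq_sqrt h0).symm
    _ ≤ rowNorm A ^ 2 := by
        apply pow_le_pow_left₀ (Real.sqrt_nonneg _) h

lemma orth {n : ℕ} {s t : Fin n} (h : s ≠ t) :
    ∑ σ : Fin n → Bool, sgn (σ s) * sgn (σ t) = 0 := by
  classical
  apply Finset.sum_ninvolution (g := fun σ => Function.update σ s (!(σ s)))
  · intro σ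
    have hs : Function.update σ s (!(σ s)) s = !(σ s) := by simp
    have ht : Function.update σ s (!(σ s)) t = σ t := Function.update_of_ne h.symm _ _
    rw [hs, ht, sgn_not]; ring
  · intro σ _
    intro hc
    have := congrFun hc s
    simp at this
  · intro σ; exact Finset.mem_univ _
  · intro σ
    funext u
    by_cases hu : u = s
    · subst hu; simp
    · simp [Function.update_of_ne hu]

lemma rademacher_sq {n : ℕ} (a : Fin n → ℝ) :
    ∑ σ : Fin n → Bool, (∑ t, sgn (σ t) * a t) ^ 2 = 2 ^ n * ∑ t, a t ^ 2 := by
  classical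
  have expand : ∀ σ : Fin n → Bool, (∑ t, sgn (σ t) * a t) ^ 2
      = ∑ s, ∑ t, (sgn (σ s) * sgn (σ t)) * (a s * a t) := by
    intro σ
    rw [sq, Finset.sum_mul_sum]
    apply Finset.sum_congr rfl; intro s _
    apply Finset.sum_congr rfl; intro t _
    ring
  simp_rw [expand]
  rw [Finset.sum_comm]
  have : ∀ s : Fin n, ∑ σ : Fin n → Bool, ∑ t, (sgn (σ s) * sgn (σ t)) * (a s * a t)
      = 2 ^ n * a s ^ 2 := by
    intro s
    rw [Finset.sum_comm]
    rw [Finset.sum_eq_single s]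
    · simp_rw [sgn_mul_self, one_mul]
      rw [Finset.sum_const]
      simp [Fintype.card_fun, sq]
    · intro t _ hts
      rw [← Finset.sum_mul, orth (Ne.symm hts), zero_mul]
    · simp
  simp_rw [this]
  rw [← Finset.mul_sum]

lemma part1 {d n k : ℕ} (U : Matrix (Fin d) (Fin k) ℝ) (V : Matrix (Fin n) (Fin k) ℝ) :
    (∑ σ : Fin n → Bool, ‖∑ t, sgn (σ t) • (fun i => (U * Vᵀ) i t)‖) / 2 ^ n ≤
      rowNorm U * ((∑ σ : Fin n → Bool,
        Real.sqrt (∑ j, (∑ t, sgn (σ t) * V t j) ^ 2)) / 2 ^ n) := by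
  rw [← mul_div_assoc, Finset.mul_sum]
  apply div_le_div_of_nonneg_right ?_ (by positivity)
  apply Finset.sum_le_sum
  intro σ _
  have hC : 0 ≤ rowNorm U * Real.sqrt (∑ j, (∑ t, sgn (σ t) * V t j) ^ 2) :=
    mul_nonneg (rowNorm_nonneg U) (Real.sqrt_nonneg _)
  rw [pi_norm_le_iff_of_nonneg hC]
  intro i
  have hval : (∑ t, sgn (σ t) • (fun i => (U * Vᵀ) i t)) i
      = ∑ j, U i j * (∑ t, sgn (σ t) * V t j) := by
    simp only [Finset.sum_apply, Pi.smul_apply, smul_eq_mul, Matrix.mul_apply,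
      Matrix.transpose_apply]
    simp_rw [Finset.mul_sum]
    rw [Finset.sum_comm]
    apply Finset.sum_congr rfl; intro j _
    apply Finset.sum_congr rfl; intro t _
    ring
  rw [Real.norm_eq_abs, hval]
  calc |∑ j, U i j * (∑ t, sgn (σ t) * V t j)|
      ≤ Real.sqrt (∑ j, U i j ^ 2) * Real.sqrt (∑ j, (∑ t, sgn (σ t) * V t j) ^ 2) := by
        have h2 := Finset.sum_mul_sq_le_sq_mul_sq Finset.univ
          (fun j => U i j) (fun j => ∑ t, sgn (σ t) * V t j)
        rw [← Real.sqrt_sq_eq_abs]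
        exact (Real.sqrt_le_sqrt h2).trans_eq
          (Real.sqrt_mul (Finset.sum_nonneg fun _ _ => sq_nonneg _) _)
    _ ≤ rowNorm U * Real.sqrt (∑ j, (∑ t, sgn (σ t) * V t j) ^ 2) :=
        mul_le_mul_of_nonneg_right (sqrt_row_le U i) (Real.sqrt_nonneg _)

lemma part2 {d n k : ℕ} (U : Matrix (Fin d) (Fin k) ℝ) (V : Matrix (Fin n) (Fin k) ℝ) :
    rowNorm U * ((∑ σ : Fin n → Bool,
        Real.sqrt (∑ j, (∑ t, sgn (σ t) * V t j) ^ 2)) / 2 ^ n) ≤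
      rowNorm U * rowNorm V * Real.sqrt n := by
  rw [mul_assoc]
  apply mul_le_mul_of_nonneg_left ?_ (rowNorm_nonneg U)
  set A : (Fin n → Bool) → ℝ := fun σ => ∑ j, (∑ t, sgn (σ t) * V t j) ^ 2 with hA
  have hA0 : ∀ σ, 0 ≤ A σ := fun σ => Finset.sum_nonneg fun _ _ => sq_nonneg _
  set T : ℝ := ∑ t, ∑ j, V t j ^ 2 with hT
  have hT0 : 0 ≤ T := Finset.sum_nonneg fun _ _ => Finset.sum_nonneg fun _ _ => sq_nonneg _
  have hswap : ∑ σ : Fin n → Bool, A σ = 2 ^ n * T := by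
    rw [hA, Finset.sum_comm]
    simp_rw [rademacher_sq]
    rw [← Finset.mul_sum, hT, Finset.sum_comm]
  have hCS : (∑ σ : Fin n → Bool, Real.sqrt (A σ)) ^ 2 ≤ (2 ^ n : ℝ) * ∑ σ : Fin n → Bool, A σ := by
    have := sq_sum_le_card_mul_sum_sq (s := (Finset.univ : Finset (Fin n → Bool)))
      (f := fun σ => Real.sqrt (A σ))
    simp only [Finset.card_univ, Fintype.card_fun, Fintype.card_bool, Fintype.card_fin] at this
    calc (∑ σ : Fin n → Bool, Real.sqrt (A σ)) ^ 2
        ≤ ((2 ^ n : ℕ) : ℝ) * ∑ σ : Fin n → Bool, Real.sqrt (A σ) ^ 2 := this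
      _ = (2 ^ n : ℝ) * ∑ σ : Fin n → Bool, A σ := by
          push_cast
          congr 1
          exact Finset.sum_congr rfl fun σ _ => Real.sq_sqrt (hA0 σ)
  have hS0 : 0 ≤ ∑ σ : Fin n → Bool, Real.sqrt (A σ) :=
    Finset.sum_nonneg fun _ _ => Real.sqrt_nonneg _
  have hkey : ∑ σ : Fin n → Bool, Real.sqrt (A σ) ≤ 2 ^ n * Real.sqrt T := by
    rw [show (2:ℝ) ^ n * Real.sqrt T = Real.sqrt ((2 ^ n) ^ 2 * T) by
      rw [Real.sqrt_mul (by positivity), Real.sqrt_sq (by positivity)]]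
    rw [Real.le_sqrt hS0]
    calc (∑ σ : Fin n → Bool, Real.sqrt (A σ)) ^ 2
        ≤ (2 ^ n : ℝ) * ∑ σ : Fin n → Bool, A σ := hCS
      _ = (2 ^ n : ℝ) ^ 2 * T := by rw [hswap]; ring
    exact mul_nonneg (by positivity) hT0
  have hTle : Real.sqrt T ≤ rowNorm V * Real.sqrt n := by
    have h1 : T ≤ n * rowNorm V ^ 2 := by
      calc T ≤ ∑ _t : Fin n, rowNorm V ^ 2 :=
            Finset.sum_le_sum fun t _ => row_sq_le V t
        _ = n * rowNorm V ^ 2 := by rw [Finset.sum_const]; simp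
    calc Real.sqrt T ≤ Real.sqrt (n * rowNorm V ^ 2) := Real.sqrt_le_sqrt h1
      _ = rowNorm V * Real.sqrt n := by
          rw [Real.sqrt_mul (by positivity), Real.sqrt_sq (rowNorm_nonneg V)]
          ring
  rw [div_le_iff₀ (by positivity)]
  calc ∑ σ : Fin n → Bool, Real.sqrt (A σ) ≤ 2 ^ n * Real.sqrt T := hkey
    _ ≤ 2 ^ n * (rowNorm V * Real.sqrt n) := by
        apply mul_le_mul_of_nonneg_left hTle (by positivity)
    _ = rowNorm V * Real.sqrt n * 2 ^ n := by ring

/-- If `X = U Vᵀ`, then for Rademacher signs `ε`,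
`𝔼‖∑ εₜ xₜ‖∞ ≤ ‖U‖_{∞,2} 𝔼‖∑ εₜ vₜ‖₂ ≤ ‖U‖_{∞,2}‖V‖_{∞,2}√n`; in particular
the expected `ℓ∞` Rademacher sum is at most `‖X‖_max √n`. -/
theorem stmt_16 (d n k : ℕ) (X : Matrix (Fin d) (Fin n) ℝ)
    (U : Matrix (Fin d) (Fin k) ℝ) (V : Matrix (Fin n) (Fin k) ℝ)
    (hfac : X = U * Vᵀ) :
    ((∑ σ : Fin n → Bool, ‖∑ t, sgn (σ t) • (fun i => X i t)‖) / 2 ^ n ≤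
      rowNorm U * ((∑ σ : Fin n → Bool,
        Real.sqrt (∑ j, (∑ t, sgn (σ t) * V t j) ^ 2)) / 2 ^ n)) ∧
    (rowNorm U * ((∑ σ : Fin n → Bool,
        Real.sqrt (∑ j, (∑ t, sgn (σ t) * V t j) ^ 2)) / 2 ^ n) ≤
      rowNorm U * rowNorm V * Real.sqrt n) ∧
    ((∑ σ : Fin n → Bool, ‖∑ t, sgn (σ t) • (fun i => X i t)‖) / 2 ^ n ≤
      sInf {c : ℝ | ∃ (k' : ℕ) (U' : Matrix (Fin d) (Fin k') ℝ)
          (V' : Matrix (Fin n) (Fin k') ℝ),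
        X = U' * V'ᵀ ∧ c = rowNorm U' * rowNorm V'} * Real.sqrt n) := by
  subst hfac
  refine ⟨part1 U V, part2 U V, ?_⟩
  set S : Set ℝ := {c : ℝ | ∃ (k' : ℕ) (U' : Matrix (Fin d) (Fin k') ℝ)
      (V' : Matrix (Fin n) (Fin k') ℝ),
    U * Vᵀ = U' * V'ᵀ ∧ c = rowNorm U' * rowNorm V'} with hSdef
  have hne : S.Nonempty := ⟨rowNorm U * rowNorm V, ⟨k, U, V, rfl, rfl⟩⟩
  have hbound : ∀ c ∈ S,
      (∑ σ : Fin n → Bool, ‖∑ t, sgn (σ t) • (fun i => (U * Vᵀ) i t)‖) / 2 ^ n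
        ≤ c * Real.sqrt n := by
    rintro c ⟨k', U', V', hf, rfl⟩
    rw [hf]
    exact (part1 U' V').trans (part2 U' V')
  rcases Nat.eq_zero_or_pos n with hn | hn
  · subst hn
    simp only [Nat.cast_zero, Real.sqrt_zero, mul_zero]
    have : (∑ σ : Fin 0 → Bool, ‖∑ t : Fin 0, sgn (σ t) • (fun i => (U * Vᵀ) i t)‖) = 0 := by
      simp
    rw [this]
    simp
  · have hsq : 0 < Real.sqrt n := Real.sqrt_pos.2 (by exact_mod_cast hn)
    have h1 : (∑ σ : Fin n → Bool, ‖∑ t, sgn (σ t) • (fun i => (U * Vᵀ) i t)‖) / 2 ^ n / Real.sqrt n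
        ≤ sInf S :=
      le_csInf hne fun c hc => (div_le_iff₀ hsq).2 (hbound c hc)
    exact (div_le_iff₀ hsq).1 h1
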